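/- In the graph Δ on vertex set Z_n where i and j are joined when rectangles R_i and R_j touch on their top or bottom sides, each connected component (weft thread) is a cycle with exactly n/gcd(n,k) vertices, and for each component there is a fixed congruence class modulo gcd(n,k) containing π(i) for all vertices i of the component. -/

import Mathlib

/-- The circular (Lee) distance between two elements of `ZMod n`. -/
def circDist (n : ℕ) (i j : ZMod n) : ℕ := min (i - j).val (j - i).val

/-- A permutation of `ZMod n` is `(s,k)`-clash-free if it moves every pair of
distinct elements at distance less than `s` to a pair at distance at least `k`. -/
def ClashFree (n s k : ℕ) (π : Equiv.Perm (ZMod n)) : Prop :=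
  ∀ i j : ZMod n, i ≠ j → circDist n i j < s → k ≤ circDist n (π i) (π j)

/-- The graph `Δ` joining `i` and `j` when rectangles `R_i` and `R_j`
touch on their top or bottom sides: `π j` is vertically `k` away from `π i`
and the horizontal projections (widths `s`) overlap. -/
def weftGraph (n s k : ℕ) (π : Equiv.Perm (ZMod n)) : SimpleGraph (ZMod n) :=
  SimpleGraph.fromRel (fun i j => (π j - π i).val = k ∧ circDist n i j < s)

/-!
Put the rectangle `R_m = [m, m + s) × [π m, π m + k)` on the torus `ZMod n × ZMod n`.
Clash-freeness makes the rectangles meeting a column pairwise disjoint, so every column contains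
exactly `s * k` covered cells, while every row contains at most `s * k`. If the rectangle sitting
at height `π i + k` did not overlap `R_i` horizontally, no rectangle could cover the row `π i + k`
above the `s` columns of `R_i`, leaving at most `n - s < s * k` covered cells in that row, which
contradicts the count. Hence the neighbours of `i` in `Δ` are exactly `π⁻¹ (π i ± k)`: `π` is an
isomorphism from `Δ` onto the circulant graph of `ZMod n` with jump `k`, whose components are the
cosets of `⟨k⟩ = ⟨gcd n k⟩`, each of size `n / gcd n k`.
-/

open Finset SimpleGraph ZMod

namespace ZMod

theorem zmultiples_natCast_gcd (n k : ℕ) :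
    AddSubgroup.zmultiples ((n.gcd k : ℕ) : ZMod n) = AddSubgroup.zmultiples (k : ZMod n) := by
  rcases Nat.eq_zero_or_pos n with rfl | hn
  · rw [Nat.gcd_zero_left]
  have : NeZero n := ⟨hn.ne'⟩
  symm
  refine AddSubgroup.eq_of_le_of_card_ge ?_ ?_
  · obtain ⟨c, hc⟩ := Nat.gcd_dvd_right n k
    rw [AddSubgroup.zmultiples_le, AddSubgroup.mem_zmultiples_iff]
    refine ⟨c, ?_⟩
    conv_rhs => rw [hc]
    rw [natCast_zsmul, nsmul_eq_mul, Nat.cast_mul, mul_comm]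
  · rw [Nat.card_zmultiples, Nat.card_zmultiples, addOrderOf_coe _ hn.ne', addOrderOf_coe _ hn.ne',
      Nat.gcd_eq_right (Nat.gcd_dvd_left n k)]

variable {n : ℕ} [NeZero n]

theorem card_filter_val_lt {L : ℕ} (hL : L ≤ n) : #{x : ZMod n | x.val < L} = L := by
  rw [← card_image_of_injective _ (val_injective n)]
  conv_rhs => rw [← card_range L]
  congr 1
  ext t
  simp only [mem_image, mem_filter, mem_univ, true_and, mem_range]
  constructor
  · rintro ⟨x, hx, rfl⟩
    exact hx
  · exact fun ht => ⟨t, by rwa [val_natCast_of_lt (by omega)], val_natCast_of_lt (by omega)⟩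

theorem card_filter_val_sub_right_lt (a : ZMod n) {L : ℕ} (hL : L ≤ n) :
    #{x : ZMod n | (x - a).val < L} = L :=
  (card_equiv (Equiv.subRight a) (by simp)).trans (card_filter_val_lt hL)

theorem card_filter_val_sub_left_lt (a : ZMod n) {L : ℕ} (hL : L ≤ n) :
    #{x : ZMod n | (a - x).val < L} = L :=
  (card_equiv (Equiv.subLeft a) (by simp)).trans (card_filter_val_lt hL)

end ZMod

namespace SimpleGraph

variable {G : Type*} [AddCommGroup G]

theorem circulantGraph_reachable_iff (S : Set G) {u v : G} :
    (circulantGraph S).Reachable u v ↔ v - u ∈ AddSubgroup.closure S := by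
  constructor
  · rintro ⟨w⟩
    induction w with
    | nil => simp
    | @cons a b c hab _ ih =>
      have hstep : b - a ∈ AddSubgroup.closure S := by
        rw [circulantGraph_adj] at hab
        rcases hab.2 with h | h
        · simpa using neg_mem (AddSubgroup.subset_closure h)
        · exact AddSubgroup.subset_closure h
      simpa using add_mem ih hstep
  · intro h
    obtain ⟨x, rfl⟩ : ∃ x, v = u + x := ⟨v - u, by abel⟩
    rw [add_sub_cancel_left] at h
    induction h using AddSubgroup.closure_induction generalizing u with
    | mem x hx =>
      by_cases hx0 : x = 0
      · simp [hx0]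
      · refine Adj.reachable ?_
        rw [circulantGraph_adj]
        exact ⟨by simpa using hx0, Or.inr (by simpa)⟩
    | zero => simp
    | add x y _ _ hx hy => exact hx.trans (by simpa [add_assoc] using hy (u := u + x))
    | neg x _ hx => simpa using (hx (u := u + -x)).symm

theorem neighborSet_circulantGraph_singleton {a : G} (ha : a ≠ 0) (u : G) :
    (circulantGraph {a}).neighborSet u = {u + a, u - a} := by
  ext v
  simp only [mem_neighborSet, circulantGraph_adj, Set.mem_singleton_iff, Set.mem_insert_iff]
  constructor
  · rintro ⟨-, h | h⟩
    · right; rw [← h]; abel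
    · left; rw [← h]; abel
  · rintro (rfl | rfl)
    · exact ⟨by simpa using ha, Or.inr (by abel)⟩
    · exact ⟨by simpa [sub_eq_add_neg] using ha, Or.inl (by abel)⟩

end SimpleGraph

theorem ZMod.ncard_neighborSet_circulantGraph_natCast {n k : ℕ} (hk : 0 < k) (h2k : 2 * k < n)
    (u : ZMod n) : ((circulantGraph {(k : ZMod n)}).neighborSet u).ncard = 2 := by
  have hkk : (k : ZMod n) + k ≠ 0 := by
    rw [← Nat.cast_add, Ne, natCast_eq_zero_iff]
    exact fun h => absurd (Nat.le_of_dvd (by omega) h) (by omega)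
  have hk0 : (k : ZMod n) ≠ 0 := fun h => hkk (by rw [h, add_zero])
  rw [neighborSet_circulantGraph_singleton hk0, Set.ncard_pair]
  intro h
  exact hkk (by linear_combination h)

section ClashFree

variable {n s k : ℕ} {π : Equiv.Perm (ZMod n)}

theorem circDist_comm (a b : ZMod n) : circDist n a b = circDist n b a :=
  min_comm _ _

theorem circDist_lt_of_val_sub_lt [NeZero n] {a b c : ZMod n} {L : ℕ}
    (ha : (c - a).val < L) (hb : (c - b).val < L) : circDist n a b < L := by
  wlog h : (c - a).val ≤ (c - b).val generalizing a b
  · rw [circDist_comm]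
    exact this hb ha (by omega)
  have hab : (a - b).val = (c - b).val - (c - a).val := by
    rw [show a - b = (c - b) - (c - a) by abel, val_sub h]
  exact (min_le_left _ _).trans_lt (by omega)

/-- `Covered s k π p q`: the cell `(p, q)` of the torus `ZMod n × ZMod n` lies in some
rectangle `R_m = [m, m + s) × [π m, π m + k)`. -/
def Covered (s k : ℕ) (π : Equiv.Perm (ZMod n)) (p q : ZMod n) : Prop :=
  ∃ m, (p - m).val < s ∧ (q - π m).val < k

variable [NeZero n]

instance : DecidableRel (Covered s k π) :=
  fun _ _ => inferInstanceAs (Decidable (∃ _, _ ∧ _))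

theorem ClashFree.card_covered_column (hcf : ClashFree n s k π) (hs : s ≤ n) (hk : k ≤ n)
    (p : ZMod n) : #{q | Covered s k π p q} = s * k := by
  have hcol : ({q | Covered s k π p q} : Finset (ZMod n))
      = ({m | (p - m).val < s} : Finset (ZMod n)).biUnion fun m => {q | (q - π m).val < k} := by
    ext q
    simp only [mem_filter, mem_univ, true_and, mem_biUnion]
    rfl
  rw [hcol, card_biUnion, sum_const_nat fun m _ => card_filter_val_sub_right_lt (π m) hk,
    card_filter_val_sub_left_lt p hs]
  intro m hm m' hm' hne
  simp only [coe_filter, mem_univ, true_and, Set.mem_ofPred_eq] at hm hm'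
  have hclash := hcf m m' hne (circDist_lt_of_val_sub_lt hm hm')
  rw [Function.onFun, Finset.disjoint_left]
  intro q hq hq'
  simp only [mem_filter, mem_univ, true_and] at hq hq'
  have := circDist_lt_of_val_sub_lt hq hq'
  omega

theorem card_covered_row_le (hs : s ≤ n) (hk : k ≤ n) (q : ZMod n) :
    #{p | Covered s k π p q} ≤ s * k := by
  have hrow : ({p | Covered s k π p q} : Finset (ZMod n))
      = ({m | (q - π m).val < k} : Finset (ZMod n)).biUnion fun m => {p | (p - m).val < s} := by
    ext p
    simp only [mem_filter, mem_univ, true_and, mem_biUnion, and_comm]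
    rfl
  have hk' : #{m : ZMod n | (q - π m).val < k} = k :=
    (card_equiv π (by simp)).trans (card_filter_val_sub_left_lt q hk)
  calc #{p | Covered s k π p q}
      ≤ ∑ m ∈ {m | (q - π m).val < k}, #{p : ZMod n | (p - m).val < s} := by
        rw [hrow]
        exact card_biUnion_le
    _ = s * k := by
        rw [sum_const_nat fun m _ => card_filter_val_sub_right_lt m hs, hk', mul_comm]

theorem ClashFree.card_covered_row_le_of_far (hcf : ClashFree n s k π) (hs : s ≤ n) (hk : k < n)
    {i : ZMod n} (hfar : s ≤ circDist n i (π.symm (π i + k))) :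
    #{p | Covered s k π p (π i + k)} ≤ n - s := by
  have hsub : ({p | Covered s k π p (π i + k)} : Finset (ZMod n))
      ⊆ ({p | ¬(p - i).val < s} : Finset (ZMod n)) := by
    intro p
    simp only [mem_filter, mem_univ, true_and]
    rintro ⟨m, hpm, hm⟩ hpi
    have hcd : circDist n i m < s := circDist_lt_of_val_sub_lt hpi hpm
    have hkv : (k : ZMod n).val = k := val_natCast_of_lt hk
    by_cases hmv : π m = π i + k
    · rw [← hmv, Equiv.symm_apply_apply] at hfar
      omega
    have hw : (π i + k - π m).val ≠ 0 := by
      rwa [Ne, ZMod.val_eq_zero, sub_eq_zero, eq_comm]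
    have hmi : i ≠ m := by
      rintro rfl
      rw [add_sub_cancel_left, hkv] at hm
      omega
    -- `π m` lies strictly inside the `k`-window above `π i`, which clash-freeness forbids
    have hval : (π m - π i).val = k - (π i + k - π m).val := by
      rw [show π m - π i = (k : ZMod n) - (π i + k - π m) by ring, val_sub (by omega), hkv]
    have := hcf i m hmi hcd
    have : circDist n (π i) (π m) ≤ (π m - π i).val := min_le_right _ _
    omega
  calc #{p | Covered s k π p (π i + k)}
      ≤ #{p : ZMod n | ¬(p - i).val < s} := card_le_card hsub
    _ = n - s := by
        rw [filter_not, card_sdiff_of_subset (filter_subset _ _), card_filter_val_sub_right_lt i hs,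
          card_univ, ZMod.card]

/-- The rectangle `R_j` sitting directly on top of `R_i` overlaps it horizontally. -/
theorem ClashFree.circDist_symm_add_lt (hcf : ClashFree n s k π) (hs : s ≤ n) (hk : k < n)
    (hn : n < s * k + s) (i : ZMod n) : circDist n i (π.symm (π i + k)) < s := by
  by_contra! hfar
  have hcount :=
    sum_card_bipartiteAbove_eq_sum_card_bipartiteBelow (Covered s k π) (s := univ) (t := univ)
  have hcols : ∑ p, #(univ.bipartiteAbove (Covered s k π) p) = n * (s * k) := by
    simp [bipartiteAbove, hcf.card_covered_column hs hk.le]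
  have hrows : ∑ q, #(univ.bipartiteBelow (Covered s k π) q) < n * (s * k) := by
    calc ∑ q, #(univ.bipartiteBelow (Covered s k π) q)
        < ∑ _q : ZMod n, s * k :=
          sum_lt_sum (fun q _ => card_covered_row_le hs hk.le q)
            ⟨π i + k, mem_univ _, (hcf.card_covered_row_le_of_far hs hk hfar).trans_lt (by omega)⟩
      _ = n * (s * k) := by simp
  omega

theorem ClashFree.weftGraph_eq_comap (hcf : ClashFree n s k π) (hs : s ≤ n) (hk : k < n)
    (hn : n < s * k + s) :
    weftGraph n s k π = (circulantGraph {(k : ZMod n)}).comap π := by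
  have hval (x : ZMod n) : x.val = k ↔ x = k :=
    ⟨fun h => by rw [← h, natCast_zmod_val], fun h => by rw [h, val_natCast_of_lt hk]⟩
  have habove (a b : ZMod n) (h : π b - π a = k) : circDist n a b < s := by
    have hb : b = π.symm (π a + k) := by rw [← h, add_sub_cancel, Equiv.symm_apply_apply]
    exact hb ▸ hcf.circDist_symm_add_lt hs hk hn a
  ext a b
  simp only [weftGraph, fromRel_adj, comap_adj, circulantGraph_adj, Set.mem_singleton_iff, hval,
    π.injective.ne_iff]
  constructor
  · rintro ⟨hab, ⟨h, -⟩ | ⟨h, -⟩⟩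
    · exact ⟨hab, Or.inr h⟩
    · exact ⟨hab, Or.inl h⟩
  · rintro ⟨hab, h | h⟩
    · exact ⟨hab, Or.inr ⟨h, circDist_comm a b ▸ habove b a h⟩⟩
    · exact ⟨hab, Or.inl ⟨h, habove a b h⟩⟩

end ClashFree

theorem Equiv.ncard_setOf_sub_mem {α G : Type*} [AddGroup G] (e : α ≃ G) (c : G)
    (H : AddSubgroup G) : {j | e j - c ∈ H}.ncard = Nat.card H := by
  have : {j | e j - c ∈ H} = (fun x => e.symm (x + c)) '' H := by
    ext j
    simp only [Set.mem_ofPred_eq, Set.mem_image, SetLike.mem_coe, Equiv.symm_apply_eq]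
    refine ⟨fun h => ⟨_, h, sub_add_cancel _ _⟩, ?_⟩
    rintro ⟨x, hx, hxe⟩
    rwa [← hxe, add_sub_cancel_right]
  rw [this, Set.ncard_image_of_injective _ fun x y h => add_left_injective c (e.symm.injective h),
    ← Nat.card_coe_set_eq]
  rfl

theorem stmt_7_general (n s k r : ℕ) (hk : 0 < k)
    (hn : n = s * k + r) (hr1 : 1 ≤ r) (hrs : r < s)
    (π : Equiv.Perm (ZMod n)) (hcf : ClashFree n s k π) :
    ∀ i : ZMod n,
      ((weftGraph n s k π).neighborSet i).ncard = 2 ∧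
      {j : ZMod n | (weftGraph n s k π).Reachable i j}
        = {j : ZMod n | ∃ t : ℕ, π j = π i + ((t * Nat.gcd n k : ℕ) : ZMod n)} ∧
      {j : ZMod n | (weftGraph n s k π).Reachable i j}.ncard = n / Nat.gcd n k := by
  intro i
  have : NeZero n := ⟨by omega⟩
  have h2kn : 2 * k < n := by nlinarith
  have hΔ := hcf.weftGraph_eq_comap (by nlinarith) (by omega) (by nlinarith)
  have hreach (j : ZMod n) :
      (weftGraph n s k π).Reachable i j ↔ π j - π i ∈ AddSubgroup.zmultiples (k : ZMod n) := by
    rw [hΔ, ← (Iso.comap π _).reachable_iff, Iso.comap_apply, Iso.comap_apply,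
      circulantGraph_reachable_iff, ← AddSubgroup.zmultiples_eq_closure]
  refine ⟨?_, ?_, ?_⟩
  · rw [hΔ]
    show (π ⁻¹' (circulantGraph {(k : ZMod n)}).neighborSet (π i)).ncard = 2
    rw [Set.ncard_preimage_of_injective_subset_range π.injective (by simp),
      ncard_neighborSet_circulantGraph_natCast hk h2kn]
  · ext j
    rw [Set.mem_ofPred_eq, hreach, ← zmultiples_natCast_gcd, ← mem_multiples_iff_mem_zmultiples,
      AddSubmonoid.mem_multiples_iff, Set.mem_ofPred_eq]
    simp only [nsmul_eq_mul, Nat.cast_mul, eq_sub_iff_add_eq, add_comm (π i), eq_comm]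
  · simp only [hreach]
    rw [Equiv.ncard_setOf_sub_mem, Nat.card_zmultiples, addOrderOf_coe _ (NeZero.ne n)]

/-- Each weft thread (connected component of `Δ`) is a cycle with exactly
`n / gcd n k` vertices: every vertex has exactly two neighbours, and the
component of `i` consists of the `j` with `π j` in the congruence class
of `π i` modulo `gcd n k`. -/
theorem stmt_7 (n s k r : ℕ) (hk : 0 < k)
    (hn : n = s * k + r) (hr1 : 1 ≤ r) (hrs : r < s) (hrk : r < k)
    (π : Equiv.Perm (ZMod n)) (hcf : ClashFree n s k π) :
    ∀ i : ZMod n,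
      ((weftGraph n s k π).neighborSet i).ncard = 2 ∧
      {j : ZMod n | (weftGraph n s k π).Reachable i j}
        = {j : ZMod n | ∃ t : ℕ, π j = π i + ((t * Nat.gcd n k : ℕ) : ZMod n)} ∧
      {j : ZMod n | (weftGraph n s k π).Reachable i j}.ncard = n / Nat.gcd n k :=
  stmt_7_general n s k r hk hn hr1 hrs π hcf
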